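/- arXiv:1405.0605 — 5 statements merged into one kernel-verified Lean document; each statement's English description precedes it below -/
import Mathlib

section
/- Let R be a positive random variable such that the distribution function of e^R is in the Gumbel max-domain of attraction with positive scaling function e(·), and assume lim_{u→∞} e(u)·log(u)/u = c₀ for some constant c₀ ∈ [0,∞). Then for any c > 1 and any c' > c₀: limsup_{u→∞} u^{log(c)/c'} · P(R > log(c·u))/P(R > log u) ≤ 1. -/
/-!
Write `Ḡ(u) = P(e^R > u)`. The Gumbel limit at `x = 1` gives `Ḡ(v + e(v)) ≤ e^{-s} Ḡ(v)` for
large `v` and any `s < 1`, while `e(v) ≤ b v / log v` for any `b > c₀`. Starting from a large `u`,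
each step `v ↦ v + e(v)` multiplies `v` by at most `1 + b / log u`, so about `log c · log u / b`
steps stay below `c u`. Hence `Ḡ(cu) / Ḡ(u) ≲ u^{-s log c / b}`, and choosing `b < c'` and
`s > b / c'` even makes `u^{log c / c'} Ḡ(cu) / Ḡ(u)` tend to `0`.
-/

open MeasureTheory ProbabilityTheory Filter Real

theorem Antitone.le_pow_mul_of_step {g e : ℝ → ℝ} {u q t : ℝ} (hg : Antitone g) (hq : 0 ≤ q)
    (ht : 0 ≤ t) (he : ∀ v ≥ u, 0 ≤ e v ∧ e v ≤ t * v)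
    (hstep : ∀ v ≥ u, g (v + e v) ≤ q * g v) (n : ℕ) :
    g (u * (1 + t) ^ n) ≤ q ^ n * g u := by
  suffices ∃ v, u ≤ v ∧ v ≤ u * (1 + t) ^ n ∧ g v ≤ q ^ n * g u by
    obtain ⟨v, -, hv, hgv⟩ := this
    exact (hg hv).trans hgv
  induction n with
  | zero => exact ⟨u, le_rfl, by simp, by simp⟩
  | succ n ih =>
    obtain ⟨v, huv, hv, hgv⟩ := ih
    obtain ⟨he0, het⟩ := he v huv
    refine ⟨v + e v, by linarith, ?_, ?_⟩
    · calc v + e v ≤ v * (1 + t) := by linarith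
        _ ≤ u * (1 + t) ^ n * (1 + t) := by gcongr
        _ = u * (1 + t) ^ (n + 1) := by ring
    · calc g (v + e v) ≤ q * g v := hstep v huv
        _ ≤ q * (q ^ n * g u) := by gcongr
        _ = q ^ (n + 1) * g u := by ring

theorem exists_nat_sub_one_lt_and_one_add_pow_le {t c : ℝ} (ht : 0 < t) (hc : 1 ≤ c) :
    ∃ n : ℕ, log c / t - 1 < n ∧ (1 + t) ^ n ≤ c := by
  refine ⟨⌊log c / t⌋₊, Nat.sub_one_lt_floor _, ?_⟩
  have hnt : ⌊log c / t⌋₊ * t ≤ log c :=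
    (le_div_iff₀ ht).mp (Nat.floor_le (div_nonneg (log_nonneg hc) ht.le))
  calc (1 + t) ^ ⌊log c / t⌋₊ ≤ exp t ^ ⌊log c / t⌋₊ := by
        gcongr
        linarith [add_one_le_exp t]
    _ = exp (⌊log c / t⌋₊ * t) := (exp_nat_mul t _).symm
    _ ≤ exp (log c) := exp_le_exp.mpr hnt
    _ = c := exp_log (by linarith)

theorem Antitone.eventually_le_rpow_mul_of_step {g e : ℝ → ℝ} {s b c : ℝ} (hg : Antitone g)
    (hg0 : ∀ u, 0 ≤ g u) (he0 : ∀ v, 0 ≤ e v)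
    (hstep : ∀ᶠ v in atTop, g (v + e v) ≤ exp (-s) * g v)
    (hgrowth : ∀ᶠ v in atTop, e v * log v ≤ b * v) (hs : 0 ≤ s) (hb : 0 < b) (hc : 1 ≤ c) :
    ∀ᶠ u in atTop, g (c * u) ≤ exp s * u ^ (-(s * log c / b)) * g u := by
  obtain ⟨U, hU⟩ := eventually_atTop.mp (hstep.and hgrowth)
  filter_upwards [eventually_ge_atTop U, eventually_gt_atTop 1] with u hUu hu
  have hlogu : 0 < log u := log_pos hu
  set t := b / log u
  have ht : 0 < t := div_pos hb hlogu
  have het : ∀ v ≥ u, 0 ≤ e v ∧ e v ≤ t * v := by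
    intro v hv
    have hlog : log u ≤ log v := log_le_log (by linarith) hv
    refine ⟨he0 v, ?_⟩
    rw [div_mul_eq_mul_div, le_div_iff₀ hlogu]
    nlinarith [(hU v (hUu.trans hv)).2, he0 v]
  obtain ⟨n, hn, hpow⟩ := exists_nat_sub_one_lt_and_one_add_pow_le ht hc
  calc g (c * u) ≤ g (u * (1 + t) ^ n) := hg (by rw [mul_comm c]; gcongr)
    _ ≤ exp (-s) ^ n * g u :=
        hg.le_pow_mul_of_step (exp_pos _).le ht.le het (fun v hv => (hU v (hUu.trans hv)).1) n
    _ = exp (-s * n) * g u := by rw [← exp_nat_mul, mul_comm (n : ℝ)]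
    _ ≤ exp (-s * (log c / t - 1)) * g u := by
        gcongr (exp ?_) * _
        · exact hg0 u
        · exact mul_le_mul_of_nonpos_left hn.le (neg_nonpos.mpr hs)
    _ = exp s * u ^ (-(s * log c / b)) * g u := by
        rw [rpow_def_of_pos (by linarith), ← exp_add]
        congr 2
        simp only [t]
        field_simp
        ring

theorem tendsto_rpow_mul_div_nhds_zero {g : ℝ → ℝ} {c a γ C : ℝ} (hg : ∀ u, 0 < g u)
    (hbound : ∀ᶠ u in atTop, g (c * u) ≤ C * u ^ (-γ) * g u) (ha : a < γ) :
    Tendsto (fun u => u ^ a * (g (c * u) / g u)) atTop (nhds 0) := by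
  refine squeeze_zero' ?_ ?_
    ((tendsto_rpow_neg_atTop (sub_pos.mpr ha)).const_mul C |>.trans (by rw [mul_zero]))
  · filter_upwards [eventually_ge_atTop 0] with u hu
    exact mul_nonneg (rpow_nonneg hu _) (div_nonneg (hg _).le (hg u).le)
  · filter_upwards [hbound, eventually_gt_atTop 0] with u hu hu0
    calc u ^ a * (g (c * u) / g u) ≤ u ^ a * (C * u ^ (-γ)) := by
          gcongr
          exact (div_le_iff₀ (hg u)).mpr hu
      _ = C * u ^ (-(γ - a)) := by
          rw [neg_sub, sub_eq_neg_add, rpow_add hu0]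
          ring

theorem eventually_le_exp_neg_mul_of_tendsto_div {g e : ℝ → ℝ} {s : ℝ} (hg : ∀ u, 0 < g u)
    (hlim : Tendsto (fun u => g (u + e u) / g u) atTop (nhds (exp (-1)))) (hs : s < 1) :
    ∀ᶠ u in atTop, g (u + e u) ≤ exp (-s) * g u := by
  filter_upwards [hlim.eventually_le_const (exp_lt_exp.mpr (neg_lt_neg hs))] with u hu
  exact (div_le_iff₀ (hg u)).mp hu

theorem eventually_mul_log_le_of_tendsto {e : ℝ → ℝ} {c₀ b : ℝ}
    (he : Tendsto (fun u => e u * log u / u) atTop (nhds c₀)) (hb : c₀ < b) :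
    ∀ᶠ u in atTop, e u * log u ≤ b * u := by
  filter_upwards [he.eventually_le_const hb, eventually_gt_atTop 0] with u hu hu0
  exact (div_le_iff₀ hu0).mp hu

theorem antitone_toReal_measure_lt {Ω : Type*} [MeasurableSpace Ω] (μ : Measure Ω)
    [IsFiniteMeasure μ] (X : Ω → ℝ) : Antitone fun u => (μ {ω | u < X ω}).toReal :=
  fun _ _ huv => ENNReal.toReal_mono (measure_ne_top _ _)
    (measure_mono fun _ hω => huv.trans_lt hω)

theorem setOf_log_lt_eq {Ω : Type*} (X : Ω → ℝ) {x : ℝ} (hx : 0 < x) :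
    {ω | log x < X ω} = {ω | x < exp (X ω)} := by
  ext ω
  exact log_lt_iff_lt_exp hx

theorem tail_ratio_bound_general
    {Ω : Type*} [MeasureSpace Ω] [IsProbabilityMeasure (ℙ : Measure Ω)]
    (R : Ω → ℝ)
    (hRtail : ∀ u : ℝ, 0 < ℙ {ω | u < Real.exp (R ω)})
    (e : ℝ → ℝ) (hepos : ∀ u : ℝ, 0 < e u)
    (hGumbel : ∀ x : ℝ, Tendsto
      (fun u => (ℙ {ω | u + x * e u < Real.exp (R ω)}).toReal /
        (ℙ {ω | u < Real.exp (R ω)}).toReal) atTop (nhds (Real.exp (-x))))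
    (c₀ : ℝ) (hc₀ : 0 ≤ c₀)
    (he : Tendsto (fun u => e u * Real.log u / u) atTop (nhds c₀))
    (c c' : ℝ) (hc : 1 < c) (hc' : c₀ < c') :
    Filter.limsup (fun u => u ^ (Real.log c / c') *
      ((ℙ {ω | Real.log (c * u) < R ω}).toReal / (ℙ {ω | Real.log u < R ω}).toReal))
      atTop ≤ 1 := by
  set G : ℝ → ℝ := fun u => (ℙ {ω | u < exp (R ω)}).toReal
  have hGpos : ∀ u, 0 < G u := fun u => ENNReal.toReal_pos (hRtail u).ne' (measure_ne_top _ _)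
  obtain ⟨b, hc₀b, hbc'⟩ := exists_between hc'
  have hb : 0 < b := hc₀.trans_lt hc₀b
  have hc'pos : 0 < c' := hb.trans hbc'
  obtain ⟨s, hbs, hs1⟩ := exists_between ((div_lt_one hc'pos).mpr hbc')
  have hs : 0 < s := (div_pos hb hc'pos).trans hbs
  have hγ : log c / c' < s * log c / b := by
    rw [div_lt_div_iff₀ hc'pos hb]
    nlinarith [log_pos hc, (div_lt_iff₀ hc'pos).mp hbs]
  have hstep := eventually_le_exp_neg_mul_of_tendsto_div hGpos
    (by simpa only [one_mul] using hGumbel 1) hs1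
  have hbound := (antitone_toReal_measure_lt ℙ (exp ∘ R)).eventually_le_rpow_mul_of_step
    (fun u => (hGpos u).le) (fun v => (hepos v).le) hstep
    (eventually_mul_log_le_of_tendsto he hc₀b) hs.le hb hc.le
  have hsets : ∀ᶠ u in atTop, u ^ (log c / c') * (G (c * u) / G u) = u ^ (Real.log c / c') *
      ((ℙ {ω | Real.log (c * u) < R ω}).toReal / (ℙ {ω | Real.log u < R ω}).toReal) := by
    filter_upwards [eventually_gt_atTop 0] with u hu
    rw [setOf_log_lt_eq R hu, setOf_log_lt_eq R (by positivity)]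
  rw [((tendsto_rpow_mul_div_nhds_zero hGpos hbound hγ).congr' hsets).limsup_eq]
  exact zero_le_one

/-- If the distribution function of `e^R` is in the Gumbel max-domain of
attraction with scaling function `e(·)` and `e(u) log u / u → c₀ ∈ [0,∞)`, then for any
`c > 1` and `c' > c₀`, `limsup_{u→∞} u^{log c / c'} P(R > log(cu))/P(R > log u) ≤ 1`. -/
theorem tail_ratio_bound
    {Ω : Type*} [MeasureSpace Ω] [IsProbabilityMeasure (ℙ : Measure Ω)]
    (R : Ω → ℝ) (hRmeas : Measurable R) (hRpos : ∀ ω, 0 < R ω)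
    (hRtail : ∀ u : ℝ, 0 < ℙ {ω | u < Real.exp (R ω)})
    (e : ℝ → ℝ) (hepos : ∀ u : ℝ, 0 < e u)
    (hGumbel : ∀ x : ℝ, Tendsto
      (fun u => (ℙ {ω | u + x * e u < Real.exp (R ω)}).toReal /
        (ℙ {ω | u < Real.exp (R ω)}).toReal) atTop (nhds (Real.exp (-x))))
    (c₀ : ℝ) (hc₀ : 0 ≤ c₀)
    (he : Tendsto (fun u => e u * Real.log u / u) atTop (nhds c₀))
    (c c' : ℝ) (hc : 1 < c) (hc' : c₀ < c') :
    Filter.limsup (fun u => u ^ (Real.log c / c') *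
      ((ℙ {ω | Real.log (c * u) < R ω}).toReal / (ℙ {ω | Real.log u < R ω}).toReal))
      atTop ≤ 1 :=
  tail_ratio_bound_general R hRtail e hepos hGumbel c₀ hc₀ he c c' hc hc'
end

section
/- Let R be a positive random variable such that the distribution function of e^R is in the Gumbel max-domain of attraction with positive scaling function e(·), and assume e(·) is O-regularly varying, i.e. for every λ > 1, 0 < liminf_{u→∞} e(λu)/e(u) ≤ limsup_{u→∞} e(λu)/e(u) < ∞. Then there exist positive constants α, M, u₀ and ε ∈ (0,1) such that for every c > 0, every x ∈ (0, c·u/e(u)) and every u > u₀: P(R > log(u + x·e(u)))/P(R > log u) ≤ (1+ε)·exp(−(1−ε)·M·(1+c)^{−α}·x). -/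
/-!
Write `T v = P(exp R > v)`. The Gumbel limit makes `T` drop by a factor `2/3` over each step
`v ↦ v + e v` once `v` is large. A Potter bound `e v ≤ C (v / u) ^ K e u` for `v ≥ u` shows that
on `[u, (1 + c) u]` these steps have length at most `C (1 + c) ^ K e u`, so `[u, u + x e u]`
contains `⌊x / (C (1 + c) ^ K)⌋` of them. The Potter bound follows from the uniform boundedness
theorem of O-regular variation, whose Steinhaus-type proof needs measurability; as `e` need not be
measurable, the theorem is applied to a measurable function comparable to `e`, read off from `T`.
-/

open MeasureTheory ProbabilityTheory Filter Real Set Topology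

lemma exists_add_mem_of_volume_gt {A : Set ℝ} (hA : MeasurableSet A) {a b s : ℝ}
    (hAab : A ⊆ Icc a b) (hs : 0 ≤ s) (hvol : ENNReal.ofReal (b - a + s) < 2 * volume A) :
    ∃ t ∈ A, t + s ∈ A := by
  by_contra! hdisj
  set B := (· + s) ⁻¹' A
  have hAB : Disjoint A B := Set.disjoint_left.2 fun t ht ht' => hdisj t ht ht'
  have hsub : A ∪ B ⊆ Icc (a - s) b := by
    rintro t (ht | ht)
    · exact ⟨by linarith [(hAab ht).1], (hAab ht).2⟩
    · exact ⟨by linarith [(hAab ht).1], by linarith [(hAab ht).2]⟩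
  have hle : (volume : Measure ℝ) (A ∪ B) ≤ ENNReal.ofReal (b - a + s) := by
    simpa [Real.volume_Icc, sub_sub_eq_add_sub, add_sub_right_comm]
      using measure_mono (μ := volume) hsub
  rw [measure_union hAB (hA.preimage (measurable_add_const s)),
    measure_preimage_add_right, ← two_mul] at hle
  exact hle.not_gt hvol

lemma tendsto_measure_inter_setOf_forall_ge_le {α : Type*} [MeasurableSpace α] (μ : Measure α)
    {S : Set α} {φ : ℕ → α → ℝ} (hφ : ∀ t ∈ S, ∃ K N, ∀ n ≥ N, φ n t ≤ K) :
    Tendsto (fun k : ℕ => μ (S ∩ {t | ∀ n ≥ k, φ n t ≤ k})) atTop (𝓝 (μ S)) := by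
  have hmono : Monotone fun k : ℕ => S ∩ {t | ∀ n ≥ k, φ n t ≤ k} :=
    fun k k' hkk' t ⟨ht, htk⟩ =>
      ⟨ht, fun n hn => (htk n (hkk'.trans hn)).trans (by exact_mod_cast hkk')⟩
  have hcover : ⋃ k : ℕ, S ∩ {t | ∀ n ≥ k, φ n t ≤ k} = S := by
    refine subset_antisymm (iUnion_subset fun k => inter_subset_left) fun t ht => ?_
    obtain ⟨K, N, hKN⟩ := hφ t ht
    refine mem_iUnion.2 ⟨max ⌈K⌉₊ N, ht, fun n hn => (hKN n (le_of_max_le_right hn)).trans ?_⟩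
    exact (Nat.le_ceil K).trans (by exact_mod_cast le_max_left _ _)
  have := tendsto_measure_iUnion_atTop (μ := μ) hmono
  rwa [hcover] at this

/-- The uniform boundedness theorem of O-regular variation, in additive form. -/
lemma exists_uniform_increment_bound {h : ℝ → ℝ} (hm : Measurable h)
    (hbdd : ∀ t > 0, ∃ K X, ∀ x ≥ X, |h (x + t) - h x| ≤ K) :
    ∃ K X, ∀ x ≥ X, ∀ s ∈ Icc (0 : ℝ) 1, h (x + s) - h x ≤ K := by
  by_contra! hcon
  choose x hx s hs hgt using fun n : ℕ => hcon n n
  set φ : ℕ → ℝ → ℝ := fun n t =>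
    max |h (x n + t) - h (x n)| |h (x n + s n + t) - h (x n + s n)|
  have hφ : ∀ t ∈ Icc (0 : ℝ) 2, ∃ K N, ∀ n ≥ N, φ n t ≤ K := by
    intro t ht
    obtain ⟨K, X, hKX⟩ : ∃ K X, ∀ y ≥ X, |h (y + t) - h y| ≤ K := by
      rcases ht.1.eq_or_lt with rfl | ht0
      · exact ⟨0, 0, fun y _ => by simp⟩
      · exact hbdd t ht0
    refine ⟨K, ⌈X⌉₊, fun n hn => max_le (hKX _ ?_) (hKX _ ?_)⟩ <;>
      linarith [Nat.le_ceil X, (Nat.cast_le (α := ℝ)).2 hn, hx n, (hs n).1]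
  set E : ℕ → Set ℝ := fun k => Icc 0 2 ∩ {t | ∀ n ≥ k, φ n t ≤ k}
  have hEmeas : ∀ k, MeasurableSet (E k) := fun k => by
    refine measurableSet_Icc.inter (measurableSet_setOfPred.2 ?_)
    exact Measurable.forall fun n => Measurable.imp measurable_const
      (measurableSet_setOfPred.1 (measurableSet_le (by fun_prop) measurable_const))
  -- `E k` fills more than half of `[0, 2]` and so meets its translate by `s n`, which bounds
  -- the increment at `x n` over the lag `s n` by `2 * k`.
  obtain ⟨k, hk⟩ : ∃ k, 3 / 2 < volume (E k) := by
    have hlim := tendsto_measure_inter_setOf_forall_ge_le volume hφ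
    rw [Real.volume_Icc] at hlim
    refine (hlim.eventually (lt_mem_nhds ?_)).exists
    rw [sub_zero, ENNReal.ofReal_ofNat, ENNReal.div_lt_iff (by norm_num) (by norm_num)]
    norm_num
  set n := 2 * k + 1
  have hvol : ENNReal.ofReal (2 - 0 + s n) < 2 * volume (E k) :=
    calc ENNReal.ofReal (2 - 0 + s n) ≤ 3 := by
          rw [ENNReal.ofReal_le_iff_le_toReal (by norm_num)]; norm_num; linarith [(hs n).2]
      _ = 2 * (3 / 2) := by rw [ENNReal.mul_div_cancel (by norm_num) (by norm_num)]
      _ < 2 * volume (E k) := by gcongr; norm_num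
  obtain ⟨t, htE, htsE⟩ :=
    exists_add_mem_of_volume_gt (hEmeas k) inter_subset_left (hs n).1 hvol
  have hupper := (abs_le.1 ((le_max_left _ _).trans (htsE.2 n (by omega)))).2
  have hlower := (abs_le.1 ((le_max_right _ _).trans (htE.2 n (by omega)))).1
  have := hgt n
  rw [← add_assoc, add_right_comm] at hupper
  push_cast [n] at *
  linarith

lemma increment_le_of_increment_le_Icc {h : ℝ → ℝ} {K X : ℝ} (hK : 0 ≤ K)
    (hunit : ∀ x ≥ X, ∀ s ∈ Icc (0 : ℝ) 1, h (x + s) - h x ≤ K) :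
    ∀ x ≥ X, ∀ s ≥ 0, h (x + s) - h x ≤ K * (s + 1) := by
  suffices ∀ n : ℕ, ∀ x ≥ X, ∀ s ∈ Icc (0 : ℝ) n, h (x + s) - h x ≤ K * (s + 1) from
    fun x hx s hs => this ⌈s⌉₊ x hx s ⟨hs, Nat.le_ceil s⟩
  intro n
  induction n with
  | zero =>
    rintro x - s ⟨hs0, hs⟩
    obtain rfl : s = 0 := le_antisymm (by exact_mod_cast hs) hs0
    simpa using hK
  | succ n ih =>
    rintro x hx s ⟨hs0, hsn⟩
    rcases le_or_gt s 1 with hs1 | hs1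
    · nlinarith [hunit x hx s ⟨hs0, hs1⟩]
    · have hfirst := hunit x hx 1 ⟨zero_le_one, le_rfl⟩
      have hrest := ih (x + 1) (by linarith) (s - 1) ⟨by linarith, by push_cast at hsn; linarith⟩
      rw [add_add_sub_cancel] at hrest
      linarith

def IsORegular (f : ℝ → ℝ) : Prop :=
  ∀ l > 1, ∃ a > 0, ∃ b, ∀ᶠ u in atTop, f (l * u) / f u ∈ Icc a b

lemma IsORegular.of_eventually_le_mul {e f : ℝ → ℝ} (he : IsORegular e)
    (hepos : ∀ᶠ u in atTop, 0 < e u) {C : ℝ} (hC : 0 < C)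
    (hfe : ∀ᶠ u in atTop, e u ≤ C * f u ∧ f u ≤ C * e u) : IsORegular f := by
  intro l hl
  obtain ⟨a, ha, b, hab⟩ := he l hl
  have hscale : Tendsto (l * ·) atTop atTop := tendsto_id.const_mul_atTop (by linarith)
  refine ⟨a / C ^ 2, by positivity, C ^ 2 * b, ?_⟩
  filter_upwards [hab, hepos, hfe, hscale.eventually hepos, hscale.eventually hfe]
    with u ⟨hau, hbu⟩ hu ⟨hu₁, hu₂⟩ hlu ⟨hlu₁, hlu₂⟩
  have hfu : 0 < f u := pos_of_mul_pos_right (hu.trans_le hu₁) hC.le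
  have hflu : 0 < f (l * u) := pos_of_mul_pos_right (hlu.trans_le hlu₁) hC.le
  rw [le_div_iff₀ hu] at hau
  rw [div_le_iff₀ hu] at hbu
  have hb : 0 ≤ b := by nlinarith
  rw [mem_Icc, div_le_div_iff₀ (by positivity) hfu, div_le_iff₀ hfu]
  constructor
  · calc a * f u ≤ a * (C * e u) := by gcongr
      _ ≤ C * e (l * u) := by nlinarith
      _ ≤ f (l * u) * C ^ 2 := by nlinarith
  · calc f (l * u) ≤ C * e (l * u) := hlu₂
      _ ≤ C * (b * e u) := by gcongr
      _ ≤ C * (b * (C * f u)) := by gcongr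
      _ = C ^ 2 * b * f u := by ring

lemma exists_eventually_mem_Icc_of_liminf_pos {α : Type*} {l : Filter α} {g : α → ℝ}
    (hinf : (0 : EReal) < liminf (fun u => (g u : EReal)) l)
    (hsup : limsup (fun u => (g u : EReal)) l < ⊤) :
    ∃ a > 0, ∃ b, ∀ᶠ u in l, g u ∈ Icc a b := by
  obtain ⟨a, ha, hainf⟩ := EReal.lt_iff_exists_real_btwn.1 hinf
  obtain ⟨b, hbsup, -⟩ := EReal.lt_iff_exists_real_btwn.1 hsup
  refine ⟨a, EReal.coe_pos.1 ha, b, ?_⟩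
  filter_upwards [eventually_lt_of_lt_liminf hainf, eventually_lt_of_limsup_lt hbsup]
    with u hau hub
  exact ⟨(EReal.coe_lt_coe_iff.1 hau).le, (EReal.coe_lt_coe_iff.1 hub).le⟩

lemma IsORegular.exists_abs_log_sub_le {f : ℝ → ℝ} (hf : IsORegular f)
    (hpos : ∀ᶠ u in atTop, 0 < f u) {t : ℝ} (ht : 0 < t) :
    ∃ K X, ∀ x ≥ X, |log (f (exp (x + t))) - log (f (exp x))| ≤ K := by
  obtain ⟨a, ha, b, hab⟩ := hf (exp t) (one_lt_exp_iff.2 ht)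
  obtain ⟨X, hX⟩ := eventually_atTop.1 (hab.and hpos)
  refine ⟨|log a| + |log b|, X, fun x hx => ?_⟩
  have hXu : X ≤ exp x := hx.trans (by linarith [add_one_le_exp x])
  obtain ⟨⟨hau, hbu⟩, hu⟩ := hX _ hXu
  have hratio :
      log (f (exp (x + t))) - log (f (exp x)) = log (f (exp t * exp x) / f (exp x)) := by
    rw [log_div (hX _ (hXu.trans (le_mul_of_one_le_left (exp_pos x).le
      (one_le_exp ht.le)))).2.ne' hu.ne', ← exp_add, add_comm]
  rw [hratio, abs_le]
  constructor
  · linarith [log_le_log ha hau, neg_abs_le (log a), abs_nonneg (log b)]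
  · linarith [log_le_log (ha.trans_le hau) hbu, le_abs_self (log b), abs_nonneg (log a)]

/-- Potter-type bound for a measurable O-regularly varying function. -/
lemma IsORegular.exists_rpow_bound {f : ℝ → ℝ} (hf : IsORegular f) (hmeas : Measurable f)
    (hpos : ∀ᶠ u in atTop, 0 < f u) :
    ∃ K > (0 : ℝ), ∃ C > 0, ∀ᶠ u in atTop, ∀ v ≥ u, f v ≤ C * (v / u) ^ K * f u := by
  set h : ℝ → ℝ := fun x => log (f (exp x))
  obtain ⟨K₀, X, hK₀⟩ := exists_uniform_increment_bound (h := h)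
    (hmeas.comp measurable_exp).log fun t ht => hf.exists_abs_log_sub_le hpos ht
  set K := max K₀ 1
  have hK : 0 < K := zero_lt_one.trans_le (le_max_right _ _)
  have hiter := increment_le_of_increment_le_Icc (h := h) hK.le
    fun x hx s hs => (hK₀ x hx s hs).trans (le_max_left _ _)
  refine ⟨K, hK, exp K, exp_pos K, ?_⟩
  filter_upwards [eventually_ge_atTop (exp X), eventually_forall_ge_atTop.2 hpos]
    with u hu hfpos v hv
  have hu0 : 0 < u := (exp_pos X).trans_le hu
  have hv0 : 0 < v := hu0.trans_le hv
  have hlog := hiter (log u) ((le_log_iff_exp_le hu0).2 hu) (log (v / u))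
    (log_nonneg ((one_le_div hu0).2 hv))
  simp only [h, log_div hv0.ne' hu0.ne', add_sub_cancel, exp_log hu0, exp_log hv0] at hlog
  rw [← log_div hv0.ne' hu0.ne'] at hlog
  calc f v = exp (log (f v)) := (exp_log (hfpos v hv)).symm
    _ ≤ exp (K * (log (v / u) + 1) + log (f u)) := exp_le_exp.2 (by linarith)
    _ = exp K * (v / u) ^ K * f u := by
      rw [exp_add, exp_log (hfpos u le_rfl), rpow_def_of_pos (div_pos hv0 hu0), mul_add,
        mul_one, exp_add, mul_comm (log _)]
      ring

lemma le_pow_floor_mul_of_step {T e : ℝ → ℝ} (hT : Antitone T) {q u w d : ℝ} (hq : 0 ≤ q)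
    (hd : 0 < d) (huw : u ≤ w) (hstep : ∀ v ∈ Icc u w, T (v + e v) ≤ q * T v)
    (he : ∀ v ∈ Icc u w, 0 ≤ e v ∧ e v ≤ d) :
    T w ≤ q ^ ⌊(w - u) / d⌋₊ * T u := by
  suffices ∀ n : ℕ, ∀ v, u ≤ v → v + n * d ≤ w → T w ≤ q ^ n * T v from
    this _ u le_rfl <| by
      linarith [(le_div_iff₀ hd).1 (Nat.floor_le (div_nonneg (sub_nonneg.2 huw) hd.le))]
  intro n
  induction n with
  | zero => intro v _ hv; simpa using hT (by simpa using hv)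
  | succ n ih =>
    intro v huv hvw
    have hv : v ∈ Icc u w := ⟨huv, by push_cast at hvw; nlinarith⟩
    calc T w ≤ q ^ n * T (v + e v) :=
          ih _ (by linarith [(he v hv).1]) (by push_cast at hvw; linarith [(he v hv).2])
      _ ≤ q ^ n * (q * T v) := by gcongr; exact hstep v hv
      _ = q ^ (n + 1) * T v := by ring

lemma pow_floor_le_inv_mul_rpow {q y : ℝ} (hq₀ : 0 < q) (hq₁ : q ≤ 1) :
    q ^ ⌊y⌋₊ ≤ q⁻¹ * q ^ y := by
  calc q ^ ⌊y⌋₊ = q ^ (⌊y⌋₊ : ℝ) := (rpow_natCast q _).symm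
    _ ≤ q ^ (y - 1) := rpow_le_rpow_of_exponent_ge hq₀ hq₁ (Nat.sub_one_lt_floor y).le
    _ = q⁻¹ * q ^ y := by rw [rpow_sub hq₀, rpow_one, div_eq_inv_mul]

lemma measurable_sInf_of_isUpperSet {α : Type*} [MeasurableSpace α] {S : α → Set ℝ}
    (hS : ∀ q : ℚ, MeasurableSet {a | (q : ℝ) ∈ S a}) (hup : ∀ a, IsUpperSet (S a))
    (hne : ∀ a, (S a).Nonempty) (hbdd : ∀ a, BddBelow (S a)) :
    Measurable fun a => sInf (S a) := by
  refine measurable_of_Iio fun r => ?_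
  have hpre : (fun a => sInf (S a)) ⁻¹' Iio r =
      ⋃ (q : ℚ) (_ : (q : ℝ) < r), {a | (q : ℝ) ∈ S a} := by
    ext a
    simp only [mem_preimage, mem_Iio, mem_iUnion, mem_ofPred_eq, exists_prop]
    constructor
    · intro ha
      obtain ⟨s, hs, hsr⟩ := (csInf_lt_iff (hbdd a) (hne a)).1 ha
      obtain ⟨q, hsq, hqr⟩ := exists_rat_btwn hsr
      exact ⟨q, hqr, hup a hsq.le hs⟩
    · rintro ⟨q, hqr, hq⟩
      exact (csInf_le (hbdd a) hq).trans_lt hqr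
  rw [hpre]
  exact MeasurableSet.iUnion fun q => MeasurableSet.iUnion fun _ => hS q

/-- The Gumbel max-domain of attraction with scaling function `e`, for the tail `T = 1 - G`. -/
def IsGumbelScale (T e : ℝ → ℝ) : Prop :=
  ∀ x, Tendsto (fun u => T (u + x * e u) / T u) atTop (𝓝 (exp (-x)))

namespace IsGumbelScale

variable {T e : ℝ → ℝ}

lemma eventually_le (hG : IsGumbelScale T e) (hTpos : ∀ v, 0 < T v) {x q : ℝ}
    (hq : exp (-x) < q) : ∀ᶠ u in atTop, T (u + x * e u) ≤ q * T u := by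
  filter_upwards [(hG x).eventually (eventually_le_nhds hq)] with u hu
  rwa [div_le_iff₀ (hTpos u)] at hu

lemma eventually_lt (hG : IsGumbelScale T e) (hTpos : ∀ v, 0 < T v) {x q : ℝ}
    (hq : q < exp (-x)) : ∀ᶠ u in atTop, q * T u < T (u + x * e u) := by
  filter_upwards [(hG x).eventually (eventually_gt_nhds hq)] with u hu
  rwa [lt_div_iff₀ (hTpos u)] at hu

/-- The comparable function is `u ↦ inf {s | T (u + s) ≤ exp (-1) * T u}`, measurable because `T`
is monotone. -/
lemma exists_measurable_comparable (hG : IsGumbelScale T e) (hT : Antitone T)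
    (hTpos : ∀ v, 0 < T v) :
    ∃ f : ℝ → ℝ, Measurable f ∧ ∀ᶠ u in atTop, e u ≤ 2 * f u ∧ f u ≤ 2 * e u := by
  set S : ℝ → Set ℝ := fun u => {s | T (u + s) ≤ exp (-1) * T u}
  have hfar := hG.eventually_le hTpos (x := 2) (exp_lt_exp.2 (by norm_num : (-2 : ℝ) < -1))
  have hnear := hG.eventually_lt hTpos (x := 1 / 2)
    (exp_lt_exp.2 (by norm_num : (-1 : ℝ) < -(1 / 2)))
  have hbdd : ∀ u, BddBelow (S u) := fun u => ⟨0, fun s hs => by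
    by_contra! hneg
    have := hT (by linarith : u + s ≤ u)
    nlinarith [hTpos u, exp_lt_one_iff.2 (by norm_num : (-1 : ℝ) < 0),
      show T (u + s) ≤ _ from hs]⟩
  have hne : ∀ u, (S u).Nonempty := by
    obtain ⟨u₁, hu₁⟩ := eventually_atTop.1 hfar
    intro u
    refine ⟨max u u₁ + 2 * e (max u u₁) - u, ?_⟩
    calc T (u + (max u u₁ + 2 * e (max u u₁) - u)) ≤ exp (-1) * T (max u u₁) := by
          rw [add_sub_cancel]; exact hu₁ _ (le_max_right _ _)
      _ ≤ exp (-1) * T u := by gcongr; exact hT (le_max_left _ _)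
  refine ⟨fun u => sInf (S u), measurable_sInf_of_isUpperSet (fun q => ?_)
    (fun u s t hst hs => (hT (by linarith)).trans hs) hne hbdd, ?_⟩
  · exact measurableSet_le (hT.measurable.comp (measurable_add_const _))
      (hT.measurable.const_mul _)
  filter_upwards [hfar, hnear] with u hfar hnear
  constructor
  · refine (div_le_iff₀' two_pos).1 (le_csInf (hne u) fun s hs => ?_)
    by_contra! hlt
    have := hT (by linarith : u + s ≤ u + 1 / 2 * e u)
    exact (hnear.trans_le this).not_ge hs
  · exact csInf_le (hbdd u) hfar

lemma exists_rpow_bound (hG : IsGumbelScale T e) (hT : Antitone T) (hTpos : ∀ v, 0 < T v)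
    (hepos : ∀ u, 0 < e u) (he : IsORegular e) :
    ∃ K > (0 : ℝ), ∃ C > 0, ∀ᶠ u in atTop, ∀ v ≥ u, e v ≤ C * (v / u) ^ K * e u := by
  obtain ⟨f, hfmeas, hfe⟩ := hG.exists_measurable_comparable hT hTpos
  have hfpos : ∀ᶠ u in atTop, 0 < f u := hfe.mono fun u hu => by linarith [hepos u, hu.1]
  obtain ⟨K, hK, C, hC, hpotter⟩ := (he.of_eventually_le_mul (.of_forall hepos) two_pos
    hfe).exists_rpow_bound hfmeas hfpos
  refine ⟨K, hK, 4 * C, by positivity, ?_⟩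
  filter_upwards [hpotter, eventually_forall_ge_atTop.2 hfe, eventually_gt_atTop 0]
    with u hpotter hfe hu v hv
  have hvu : 0 ≤ (v / u) ^ K := rpow_nonneg (div_nonneg (hu.trans_le hv).le hu.le) K
  calc e v ≤ 2 * f v := (hfe v hv).1
    _ ≤ 2 * (C * (v / u) ^ K * f u) := by gcongr; exact hpotter v hv
    _ ≤ 2 * (C * (v / u) ^ K * (2 * e u)) := by gcongr; exact (hfe u le_rfl).2
    _ = 4 * C * (v / u) ^ K * e u := by ring

theorem exists_tail_ratio_le (hG : IsGumbelScale T e) (hT : Antitone T)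
    (hTpos : ∀ v, 0 < T v) (hepos : ∀ u, 0 < e u) (he : IsORegular e) :
    ∃ α > (0 : ℝ), ∃ M > (0 : ℝ), ∃ u₀ > (0 : ℝ), ∀ c > (0 : ℝ), ∀ u > u₀,
      ∀ x ∈ Ioo (0 : ℝ) (c * u / e u),
        T (u + x * e u) / T u ≤ 3 / 2 * exp (-(1 / 2) * M * (1 + c) ^ (-α) * x) := by
  obtain ⟨K, hK, C, hC, hpotter⟩ := hG.exists_rpow_bound hT hTpos hepos he
  have hstep := hG.eventually_le hTpos (x := 1) (q := 2 / 3)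
    (by linarith [exp_neg_one_lt_half])
  simp only [one_mul] at hstep
  obtain ⟨u₁, hu₁⟩ := eventually_atTop.1 (hpotter.and (eventually_forall_ge_atTop.2 hstep))
  refine ⟨K, hK, 2 * log (3 / 2) / C, by positivity, max u₁ 1, by positivity,
    fun c hc u hu x ⟨hx0, hxc⟩ => ?_⟩
  obtain ⟨hpotter, hstep⟩ := hu₁ u (le_max_left _ _ |>.trans hu.le)
  have hu0 : 0 < u := one_pos.trans_le (le_max_right _ _) |>.trans hu
  have hB : 0 < C * (1 + c) ^ K := by positivity
  have hxe : x * e u ≤ c * u := ((lt_div_iff₀ (hepos u)).1 hxc).le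
  have hchain := le_pow_floor_mul_of_step hT (by norm_num) (mul_pos hB (hepos u))
    (by nlinarith [hepos u] : u ≤ u + x * e u) (fun v hv => hstep v hv.1)
    fun v ⟨huv, hvw⟩ => ⟨(hepos v).le, (hpotter v huv).trans <| by
      have hvu : v / u ≤ 1 + c := by rw [div_le_iff₀ hu0]; linarith
      have := rpow_le_rpow (div_nonneg (hu0.le.trans huv) hu0.le) hvu hK.le
      have := (hepos u).le
      gcongr⟩
  rw [add_sub_cancel_left, mul_div_mul_right _ _ (hepos u).ne'] at hchain
  calc T (u + x * e u) / T u ≤ (2 / 3) ^ ⌊x / (C * (1 + c) ^ K)⌋₊ :=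
        (div_le_iff₀ (hTpos u)).2 hchain
    _ ≤ (2 / 3)⁻¹ * (2 / 3) ^ (x / (C * (1 + c) ^ K)) :=
        pow_floor_le_inv_mul_rpow (by norm_num) (by norm_num)
    _ = 3 / 2 * exp (-(1 / 2) * (2 * log (3 / 2) / C) * (1 + c) ^ (-K) * x) := by
      rw [rpow_def_of_pos (by norm_num), rpow_neg (by positivity), ← inv_div (3 : ℝ), log_inv]
      norm_num
      field_simp

end IsGumbelScale

theorem exponential_tail_bound_general
    {Ω : Type*} [MeasureSpace Ω] [IsProbabilityMeasure (ℙ : Measure Ω)]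
    (R : Ω → ℝ)
    (hRtail : ∀ u : ℝ, 0 < ℙ {ω | u < Real.exp (R ω)})
    (e : ℝ → ℝ) (hepos : ∀ u : ℝ, 0 < e u)
    (hGumbel : ∀ x : ℝ, Tendsto
      (fun u => (ℙ {ω | u + x * e u < Real.exp (R ω)}).toReal /
        (ℙ {ω | u < Real.exp (R ω)}).toReal) atTop (nhds (Real.exp (-x))))
    (hOreg : ∀ l : ℝ, 1 < l →
      (0 : EReal) < Filter.liminf (fun u => ((e (l * u) / e u : ℝ) : EReal)) atTop ∧
        Filter.limsup (fun u => ((e (l * u) / e u : ℝ) : EReal)) atTop < ⊤) :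
    ∃ α > (0 : ℝ), ∃ M > (0 : ℝ), ∃ u₀ > (0 : ℝ), ∃ ε ∈ Set.Ioo (0 : ℝ) 1,
      ∀ c > (0 : ℝ), ∀ u > u₀, ∀ x ∈ Set.Ioo (0 : ℝ) (c * u / e u),
        (ℙ {ω | Real.log (u + x * e u) < R ω}).toReal /
            (ℙ {ω | Real.log u < R ω}).toReal ≤
          (1 + ε) * Real.exp (-(1 - ε) * M * (1 + c) ^ (-α) * x) := by
  set T : ℝ → ℝ := fun v => (ℙ {ω | v < exp (R ω)}).toReal
  have hT : Antitone T := fun v w hvw =>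
    ENNReal.toReal_mono (measure_ne_top _ _) (measure_mono fun ω hω => hvw.trans_lt hω)
  have hTpos : ∀ v, 0 < T v := fun v => ENNReal.toReal_pos (hRtail v).ne' (measure_ne_top _ _)
  obtain ⟨α, hα, M, hM, u₀, hu₀, hbound⟩ :=
    IsGumbelScale.exists_tail_ratio_le (T := T) hGumbel hT hTpos hepos
      fun l hl => exists_eventually_mem_Icc_of_liminf_pos (hOreg l hl).1 (hOreg l hl).2
  refine ⟨α, hα, M, hM, u₀, hu₀, 1 / 2, ⟨by norm_num, by norm_num⟩, fun c hc u hu x hx => ?_⟩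
  have hu0 : 0 < u := hu₀.trans hu
  have hw0 : 0 < u + x * e u := by nlinarith [hepos u, hx.1]
  simp only [log_lt_iff_lt_exp hu0, log_lt_iff_lt_exp hw0]
  convert hbound c hc u hu x hx using 2 <;> norm_num

/-- If the distribution function of `e^R` is in the Gumbel max-domain of
attraction with scaling function `e(·)` and `e` is O-regularly varying, then there exist
`α, M, u₀ > 0` and `ε ∈ (0,1)` such that for all `c > 0`, `u > u₀` and `x ∈ (0, cu/e(u))`,
`P(R > log(u + x e(u)))/P(R > log u) ≤ (1+ε) exp(−(1−ε) M (1+c)^{−α} x)`. -/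
theorem exponential_tail_bound
    {Ω : Type*} [MeasureSpace Ω] [IsProbabilityMeasure (ℙ : Measure Ω)]
    (R : Ω → ℝ) (hRmeas : Measurable R) (hRpos : ∀ ω, 0 < R ω)
    (hRtail : ∀ u : ℝ, 0 < ℙ {ω | u < Real.exp (R ω)})
    (e : ℝ → ℝ) (hepos : ∀ u : ℝ, 0 < e u)
    (hGumbel : ∀ x : ℝ, Tendsto
      (fun u => (ℙ {ω | u + x * e u < Real.exp (R ω)}).toReal /
        (ℙ {ω | u < Real.exp (R ω)}).toReal) atTop (nhds (Real.exp (-x))))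
    (hOreg : ∀ l : ℝ, 1 < l →
      (0 : EReal) < Filter.liminf (fun u => ((e (l * u) / e u : ℝ) : EReal)) atTop ∧
        Filter.limsup (fun u => ((e (l * u) / e u : ℝ) : EReal)) atTop < ⊤) :
    ∃ α > (0 : ℝ), ∃ M > (0 : ℝ), ∃ u₀ > (0 : ℝ), ∃ ε ∈ Set.Ioo (0 : ℝ) 1,
      ∀ c > (0 : ℝ), ∀ u > u₀, ∀ x ∈ Set.Ioo (0 : ℝ) (c * u / e u),
        (ℙ {ω | Real.log (u + x * e u) < R ω}).toReal /
            (ℙ {ω | Real.log u < R ω}).toReal ≤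
          (1 + ε) * Real.exp (-(1 - ε) * M * (1 + c) ^ (-α) * x) :=
  exponential_tail_bound_general R hRtail e hepos hGumbel hOreg
end

section
/- Let R be a positive random variable whose distribution function F has infinite upper endpoint and is in the Gumbel max-domain of attraction with positive scaling function b, i.e. lim_{u→∞}(1−F(u+x·b(u)))/(1−F(u)) = e^{−x} for all x ∈ ℝ, and assume lim_{u→∞} b(u) = 0. Then the distribution function of e^R is in the Gumbel max-domain of attraction with scaling function e(u) = u·b(log u), i.e. for every x ∈ ℝ, lim_{u→∞} P(e^R > u + x·u·b(log u))/P(e^R > u) = e^{−x}. -/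
open MeasureTheory ProbabilityTheory Filter Real Topology

/-!
Since `{u < e^R} = {log u < R}`, the tail ratio of `e^R` at `u` with scale `u b(log u)` is the
tail ratio of `R` at `w = log u` with shift `log (1 + x b(w)) = c(w) b(w)`, where `c(w) → x`
because `b(w) → 0`. A Gumbel limit survives such a perturbation of `x`: the tail is antitone,
so the ratio with shift `c(w) b(w)` is squeezed between those with shifts `(x ± ε) b(w)`, and
`e^{-x}` is continuous in `x`.
-/

/-- `G` stands for the tail `1 - F` of a distribution function `F` in the Gumbel domain of
attraction with scaling function `b`. -/
def IsGumbelTail (G b : ℝ → ℝ) : Prop :=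
  ∀ x : ℝ, Tendsto (fun u => G (u + x * b u) / G u) atTop (𝓝 (exp (-x)))

theorem IsGumbelTail.tendsto_add_mul_of_tendsto {G b c : ℝ → ℝ} {x : ℝ} (hG : IsGumbelTail G b)
    (hG_anti : Antitone G) (hG_nonneg : ∀ u, 0 ≤ G u) (hb : ∀ u, 0 < b u)
    (hc : Tendsto c atTop (𝓝 x)) :
    Tendsto (fun u => G (u + c u * b u) / G u) atTop (𝓝 (exp (-x))) := by
  have hexp : Continuous fun t => exp (-t) := by fun_prop
  refine tendsto_order.2 ⟨fun a ha => ?_, fun a ha => ?_⟩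
  · obtain ⟨y, hay, hxy⟩ : ∃ y, a < exp (-y) ∧ x < y :=
      ((hexp.tendsto x).eventually (lt_mem_nhds ha) |>.filter_mono nhdsWithin_le_nhds
        |>.and (self_mem_nhdsWithin (s := Set.Ioi x))).exists
    filter_upwards [(tendsto_order.1 (hG y)).1 a hay, hc.eventually (gt_mem_nhds hxy)]
      with u hu hcu
    refine hu.trans_le (div_le_div_of_nonneg_right (hG_anti ?_) (hG_nonneg u))
    gcongr
    exact (hb u).le
  · obtain ⟨y, hay, hyx⟩ : ∃ y, exp (-y) < a ∧ y < x :=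
      ((hexp.tendsto x).eventually (gt_mem_nhds ha) |>.filter_mono nhdsWithin_le_nhds
        |>.and (self_mem_nhdsWithin (s := Set.Iio x))).exists
    filter_upwards [(tendsto_order.1 (hG y)).2 a hay, hc.eventually (lt_mem_nhds hyx)]
      with u hu hcu
    refine (div_le_div_of_nonneg_right (hG_anti ?_) (hG_nonneg u)).trans_lt hu
    gcongr
    exact (hb u).le

theorem tendsto_log_one_add_mul_div (x : ℝ) :
    Tendsto (fun t => log (1 + x * t) / t) (𝓝[≠] 0) (𝓝 x) := by
  have hd : HasDerivAt (fun t => log (1 + x * t)) x 0 := by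
    simpa using (((hasDerivAt_id (0 : ℝ)).const_mul x).const_add 1).log (by simp)
  exact hd.tendsto_slope.congr fun t => by simp [slope_def_field]

theorem expR_gumbel_mda_general
    {Ω : Type*} [MeasureSpace Ω] [IsProbabilityMeasure (ℙ : Measure Ω)]
    (R : Ω → ℝ) (hRmeas : Measurable R)
    (F : ℝ → ℝ) (hF : ∀ u, F u = (ℙ {ω | R ω ≤ u}).toReal)
    (b : ℝ → ℝ) (hbpos : ∀ u : ℝ, 0 < b u)
    (hGumbel : ∀ x : ℝ, Tendsto (fun u => (1 - F (u + x * b u)) / (1 - F u)) atTop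
      (nhds (Real.exp (-x))))
    (hb0 : Tendsto b atTop (nhds 0)) :
    ∀ x : ℝ, Tendsto
      (fun u => (ℙ {ω | u + x * (u * b (Real.log u)) < Real.exp (R ω)}).toReal /
        (ℙ {ω | u < Real.exp (R ω)}).toReal) atTop (nhds (Real.exp (-x))) := by
  intro x
  have hF_mono : Monotone F := fun v w hvw => by
    simp only [hF]
    exact measureReal_mono fun ω (hω : R ω ≤ v) => hω.trans hvw
  have hexp_tail : ∀ s > 0, (ℙ {ω | s < exp (R ω)}).toReal = 1 - F (log s) := fun s hs => by
    simp only [← log_lt_iff_lt_exp hs, hF, ← not_le]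
    exact probReal_compl_eq_one_sub (hRmeas measurableSet_Iic)
  have hc : Tendsto (fun w => log (1 + x * b w) / b w) atTop (𝓝 x) :=
    (tendsto_log_one_add_mul_div x).comp
      (tendsto_nhdsWithin_iff.2 ⟨hb0, .of_forall fun w => (hbpos w).ne'⟩)
  have hlim := (IsGumbelTail.tendsto_add_mul_of_tendsto (G := fun v => 1 - F v) hGumbel
    (fun v w hvw => sub_le_sub_left (hF_mono hvw) 1)
    (fun v => sub_nonneg.2 ((hF v).trans_le measureReal_le_one)) hbpos hc).comp tendsto_log_atTop
  have h_one_add : ∀ᶠ u in atTop, 0 < 1 + x * b (log u) := by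
    have := ((hb0.comp tendsto_log_atTop).const_mul x).const_add 1
    simpa using this.eventually (lt_mem_nhds (by simp))
  refine hlim.congr' ?_
  filter_upwards [eventually_gt_atTop 0, h_one_add] with u hu h1
  have hscale : u + x * (u * b (log u)) = u * (1 + x * b (log u)) := by ring
  rw [Function.comp_apply, hexp_tail u hu, hexp_tail _ (hscale ▸ mul_pos hu h1), hscale,
    log_mul hu.ne' h1.ne', div_mul_cancel₀ _ (hbpos _).ne']

/-- If the distribution function `F` of a positive random variable `R` (with
infinite upper endpoint) is in the Gumbel max-domain of attraction with scaling function
`b` and `b(u) → 0`, then the distribution function of `e^R` is in the Gumbel max-domain of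
attraction with scaling function `e(u) = u b(log u)`. -/
theorem expR_gumbel_mda
    {Ω : Type*} [MeasureSpace Ω] [IsProbabilityMeasure (ℙ : Measure Ω)]
    (R : Ω → ℝ) (hRmeas : Measurable R) (hRpos : ∀ ω, 0 < R ω)
    (F : ℝ → ℝ) (hF : ∀ u, F u = (ℙ {ω | R ω ≤ u}).toReal)
    (hFendpoint : ∀ u : ℝ, F u < 1)
    (b : ℝ → ℝ) (hbpos : ∀ u : ℝ, 0 < b u)
    (hGumbel : ∀ x : ℝ, Tendsto (fun u => (1 - F (u + x * b u)) / (1 - F u)) atTop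
      (nhds (Real.exp (-x))))
    (hb0 : Tendsto b atTop (nhds 0)) :
    ∀ x : ℝ, Tendsto
      (fun u => (ℙ {ω | u + x * (u * b (Real.log u)) < Real.exp (R ω)}).toReal /
        (ℙ {ω | u < Real.exp (R ω)}).toReal) atTop (nhds (Real.exp (-x))) :=
  expR_gumbel_mda_general R hRmeas F hF b hbpos hGumbel hb0
end

section
/- Let d ≥ 3 be an integer and q ∈ ℝ. Then ∫₀^∞ ∫₋₁¹ exp(q·v·√x)·e^{−x}·x^{(d−3)/2}·(1−v²)^{(d−4)/2} dv dx = √π · Γ((d−2)/2) · exp(q²/4). -/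
/-!
Substituting `u = v √x` turns the inner integral into `e^{-x} ∫_{u² < x} e^{q u} (x - u²)^a du`
with `a = (d - 4)/2`. After swapping the order of integration, the `x`-integral over `x > u²` is a
shifted Gamma integral equal to `e^{-u²} Γ(a + 1)`, and what remains is the Gaussian integral
`∫ e^{q u - u²} du = √π e^{q²/4}`.
-/

open Real MeasureTheory Set

theorem setIntegral_Ioi_comp_sub_right {E : Type*} [NormedAddCommGroup E] [NormedSpace ℝ E]
    (f : ℝ → E) (c : ℝ) : ∫ x in Ioi c, f (x - c) = ∫ y in Ioi 0, f y := by
  simpa only [preimage_sub_const_Ioi, zero_add] using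
    (measurePreserving_sub_right volume c).setIntegral_preimage_emb
      (measurableEmbedding_subRight c) f (Ioi 0)

theorem integrableOn_Ioi_comp_sub_right_iff {E : Type*} [NormedAddCommGroup E]
    (f : ℝ → E) (c : ℝ) : IntegrableOn (fun x => f (x - c)) (Ioi c) ↔ IntegrableOn f (Ioi 0) := by
  simpa only [preimage_sub_const_Ioi, zero_add, Function.comp_def] using
    (measurePreserving_sub_right volume c).integrableOn_comp_preimage
      (measurableEmbedding_subRight c) (f := f) (s := Ioi 0)

theorem setIntegral_Ioo_neg_one_one_comp_mul_left {s : ℝ} (hs : 0 < s) (g : ℝ → ℝ) :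
    ∫ v in Ioo (-1 : ℝ) 1, s * g (s * v) = ∫ u in Ioo (-s) s, g u := by
  rw [integral_const_mul, ← integral_Ioc_eq_integral_Ioo, ← integral_Ioc_eq_integral_Ioo,
    ← intervalIntegral.integral_of_le (by norm_num),
    ← intervalIntegral.integral_of_le (by linarith),
    ← smul_eq_mul, intervalIntegral.smul_integral_comp_mul_left]
  simp

section ShiftedGamma

variable {a : ℝ} (c : ℝ)

theorem integrableOn_Ioi_exp_neg_mul_sub_rpow (ha : 0 < a + 1) :
    IntegrableOn (fun x => exp (-x) * (x - c) ^ a) (Ioi c) := by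
  have h : IntegrableOn (fun y => exp (-c) * (exp (-y) * y ^ a)) (Ioi 0) := by
    have := GammaIntegral_convergent ha
    rw [add_sub_cancel_right] at this
    exact this.const_mul _
  refine ((integrableOn_Ioi_comp_sub_right_iff _ c).2 h).congr_fun (fun x _ => ?_)
    measurableSet_Ioi
  dsimp only
  rw [← mul_assoc, ← exp_add]
  ring_nf

theorem integral_Ioi_exp_neg_mul_sub_rpow (ha : 0 < a + 1) :
    ∫ x in Ioi c, exp (-x) * (x - c) ^ a = exp (-c) * Gamma (a + 1) := by
  have h (x : ℝ) :
      exp (-x) * (x - c) ^ a = exp (-c) * (exp (-(x - c)) * (x - c) ^ (a + 1 - 1)) := by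
    rw [add_sub_cancel_right, ← mul_assoc, ← exp_add]
    ring_nf
  simp_rw [h]
  rw [integral_const_mul, setIntegral_Ioi_comp_sub_right (fun y => exp (-y) * y ^ (a + 1 - 1)) c,
    Gamma_eq_integral ha]

end ShiftedGamma

theorem exp_mul_mul_exp_neg_sq (q u : ℝ) :
    exp (q * u) * exp (-u ^ 2) = exp (q ^ 2 / 4) * exp (-(u - q / 2) ^ 2) := by
  rw [← exp_add, ← exp_add]
  ring_nf

theorem integrable_exp_mul_mul_exp_neg_sq (q : ℝ) :
    Integrable fun u => exp (q * u) * exp (-u ^ 2) := by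
  simp_rw [exp_mul_mul_exp_neg_sq]
  refine Integrable.const_mul ?_ _
  simpa using (integrable_exp_neg_mul_sq one_pos).comp_sub_right (q / 2)

theorem integral_exp_mul_mul_exp_neg_sq (q : ℝ) :
    ∫ u, exp (q * u) * exp (-u ^ 2) = √π * exp (q ^ 2 / 4) := by
  simp_rw [exp_mul_mul_exp_neg_sq]
  rw [integral_const_mul, integral_sub_right_eq_self (fun u => exp (-u ^ 2)), mul_comm]
  simpa using integral_gaussian 1

noncomputable def parabolaKernel (q a : ℝ) : ℝ × ℝ → ℝ :=
  {p : ℝ × ℝ | p.2 ^ 2 < p.1}.indicator fun p => exp (q * p.2) * (exp (-p.1) * (p.1 - p.2 ^ 2) ^ a)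

section ParabolaKernel

variable {q a : ℝ}

theorem measurable_parabolaKernel : Measurable (parabolaKernel q a) :=
  (by fun_prop : Measurable _).indicator (measurableSet_lt (by fun_prop) (by fun_prop))

theorem parabolaKernel_nonneg (p : ℝ × ℝ) : 0 ≤ parabolaKernel q a p :=
  indicator_nonneg (fun p (hp : p.2 ^ 2 < p.1) => by
    have : 0 ≤ p.1 - p.2 ^ 2 := by linarith
    positivity) p

theorem parabolaKernel_fst_eq (u : ℝ) : (fun x => parabolaKernel q a (x, u)) =
    (Ioi (u ^ 2)).indicator fun x => exp (q * u) * (exp (-x) * (x - u ^ 2) ^ a) := rfl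

theorem integral_parabolaKernel_fst (ha : 0 < a + 1) (u : ℝ) :
    ∫ x in Ioi 0, parabolaKernel q a (x, u) = exp (q * u) * exp (-u ^ 2) * Gamma (a + 1) := by
  rw [parabolaKernel_fst_eq, setIntegral_indicator measurableSet_Ioi, Ioi_inter_Ioi,
    max_eq_right (sq_nonneg u), integral_const_mul, integral_Ioi_exp_neg_mul_sub_rpow _ ha,
    mul_assoc]

theorem integrable_parabolaKernel (ha : 0 < a + 1) :
    Integrable (parabolaKernel q a) ((volume.restrict (Ioi 0)).prod volume) := by
  refine (integrable_prod_iff' measurable_parabolaKernel.aestronglyMeasurable).2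
    ⟨.of_forall fun u => ?_, ?_⟩
  · rw [parabolaKernel_fst_eq]
    have : IntegrableOn (fun x => exp (q * u) * (exp (-x) * (x - u ^ 2) ^ a)) (Ioi (u ^ 2)) :=
      (integrableOn_Ioi_exp_neg_mul_sub_rpow _ ha).const_mul _
    exact (this.integrable_indicator measurableSet_Ioi).restrict
  · simp_rw [Real.norm_of_nonneg (parabolaKernel_nonneg _), integral_parabolaKernel_fst ha]
    exact (integrable_exp_mul_mul_exp_neg_sq q).mul_const _

theorem integral_parabolaKernel_snd {x : ℝ} (hx : 0 < x) :
    ∫ u, parabolaKernel q a (x, u) = ∫ v in Ioo (-1 : ℝ) 1,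
      exp (q * v * √x) * exp (-x) * x ^ (a + 1 / 2) * (1 - v ^ 2) ^ a := by
  have hslice : (fun u => parabolaKernel q a (x, u)) = (Ioo (-√x) √x).indicator
      fun u => exp (q * u) * (exp (-x) * (x - u ^ 2) ^ a) := by
    ext u
    simp only [parabolaKernel, indicator, mem_ofPred_eq, mem_Ioo, Real.sq_lt]
  rw [hslice, integral_indicator measurableSet_Ioo,
    ← setIntegral_Ioo_neg_one_one_comp_mul_left (sqrt_pos.2 hx)]
  refine setIntegral_congr_fun measurableSet_Ioo fun v ⟨hv₁, hv₂⟩ => ?_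
  have hv : 0 ≤ 1 - v ^ 2 := by nlinarith
  have hrad : x - (√x * v) ^ 2 = x * (1 - v ^ 2) := by
    rw [mul_pow, sq_sqrt hx.le]; ring
  have hpow : x ^ (a + 1 / 2) = √x * x ^ a := by
    rw [sqrt_eq_rpow, ← rpow_add hx, add_comm]
  rw [hrad, mul_rpow hx.le hv, hpow]
  ring_nf

end ParabolaKernel

theorem integral_Ioi_integral_Ioo_exp_mul_sqrt {a : ℝ} (ha : 0 < a + 1) (q : ℝ) :
    ∫ x in Ioi 0, ∫ v in Ioo (-1 : ℝ) 1,
        exp (q * v * √x) * exp (-x) * x ^ (a + 1 / 2) * (1 - v ^ 2) ^ a =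
      √π * Gamma (a + 1) * exp (q ^ 2 / 4) := calc
  _ = ∫ x in Ioi 0, ∫ u, parabolaKernel q a (x, u) :=
    setIntegral_congr_fun measurableSet_Ioi fun x hx => (integral_parabolaKernel_snd hx).symm
  _ = ∫ u, ∫ x in Ioi 0, parabolaKernel q a (x, u) :=
    integral_integral_swap (integrable_parabolaKernel ha)
  _ = ∫ u, exp (q * u) * exp (-u ^ 2) * Gamma (a + 1) := by
    simp_rw [integral_parabolaKernel_fst ha]
  _ = √π * Gamma (a + 1) * exp (q ^ 2 / 4) := by
    rw [integral_mul_const, integral_exp_mul_mul_exp_neg_sq]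
    ring

/-- For an integer `d ≥ 3` and `q ∈ ℝ`,
`∫₀^∞ ∫₋₁¹ exp(q v √x) e^{−x} x^{(d−3)/2} (1−v²)^{(d−4)/2} dv dx = √π Γ((d−2)/2) exp(q²/4)`. -/
theorem double_integral_identity (d : ℕ) (hd : 3 ≤ d) (q : ℝ) :
    ∫ x in Set.Ioi (0 : ℝ), ∫ v in Set.Ioo (-1 : ℝ) 1,
        Real.exp (q * v * Real.sqrt x) * Real.exp (-x) * x ^ (((d : ℝ) - 3) / 2) *
          (1 - v ^ 2) ^ (((d : ℝ) - 4) / 2) =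
      Real.sqrt π * Real.Gamma (((d : ℝ) - 2) / 2) * Real.exp (q ^ 2 / 4) := by
  have hd' : (3 : ℝ) ≤ d := by exact_mod_cast hd
  rw [show ((d : ℝ) - 3) / 2 = ((d : ℝ) - 4) / 2 + 1 / 2 by ring,
    show ((d : ℝ) - 2) / 2 = ((d : ℝ) - 4) / 2 + 1 by ring]
  exact integral_Ioi_integral_Ioo_exp_mul_sqrt (by linarith) q
end

section
/- Let R be a positive random variable such that the distribution function of e^R is in the Gumbel max-domain of attraction with positive scaling function e(·), and assume lim_{u→∞} e(u)·log(u)/u = c₀ for some c₀ ∈ [0,∞). Then for every m > 0 and every c₁ > 0 there exists k > 0 such that, with a(u) = 1 − k/log u, lim_{u→∞} u^m · P(e^R > (u/c₁)^{1/a(u)})/P(e^R > u) = 0. -/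
/-!
Write `F(t) = P(e^R > t)`. The Gumbel limit at `x = 1` gives `F(t + e(t)) ≤ e^{-1/2} F(t)` for
large `t`, so along the orbit `u, u + e(u), …` of `t ↦ t + e(t)` the tail decays geometrically.
Since `e(t) = O(t / log t)`, each step multiplies `t` by at most `exp (C / log u)`, so the first
`n ≈ 2(m+1) log u` steps stay below `u · exp K` for a constant `K`. Choosing `k` large makes
`(u/c₁)^{1/(1 - k/log u)} ≥ u · exp K`, hence its tail is at most
`e^{-n/2} F(u) ≤ u^{-(m+1)} F(u)`.
-/

open MeasureTheory ProbabilityTheory Filter Real Topology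

lemma mul_exp_le_rpow_one_div_one_sub {u c k K : ℝ} (hu : 0 < u) (hc : 0 < c) (hK : 0 ≤ K)
    (hk : 0 ≤ k) (hkK : K + log c ≤ k) (hku : k < log u) :
    u * exp K ≤ (u / c) ^ (1 / (1 - k / log u)) := by
  set L := log u with hL
  have hLk : 0 < L - k := by linarith
  have hL0 : 0 < L := by linarith
  have hexponent : L + K ≤ (L - log c) * (1 / (1 - k / L)) := by
    rw [show 1 / (1 - k / L) = L / (L - k) by field_simp [hL0.ne'], ← mul_div_assoc,
      le_div_iff₀ hLk]
    nlinarith [mul_nonneg hK hk]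
  rw [rpow_def_of_pos (div_pos hu hc), log_div hu.ne' hc.ne', ← hL,
    show u * exp K = exp (L + K) by rw [exp_add, hL, exp_log hu]]
  exact exp_le_exp.2 hexponent

section TailBounds

variable {F e : ℝ → ℝ}

lemma le_iterate_add_self (he : ∀ t, 0 ≤ e t) (u : ℝ) (n : ℕ) :
    u ≤ (fun t => t + e t)^[n] u :=
  Function.id_le_iterate_of_id_le (fun t => le_add_of_nonneg_right (he t)) n u

lemma apply_iterate_add_le_pow_mul {U q : ℝ} (hq : 0 ≤ q) (he : ∀ t, 0 ≤ e t)
    (hF : ∀ t, U ≤ t → F (t + e t) ≤ q * F t) {u : ℝ} (hu : U ≤ u) (n : ℕ) :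
    F ((fun t => t + e t)^[n] u) ≤ q ^ n * F u := by
  induction n with
  | zero => simp
  | succ n ih =>
    rw [Function.iterate_succ_apply', pow_succ', mul_assoc]
    exact (hF _ (hu.trans (le_iterate_add_self he u n))).trans
      (mul_le_mul_of_nonneg_left ih hq)

lemma iterate_add_le_mul_exp {U C : ℝ} (hC : 0 ≤ C) (he : ∀ t, 0 ≤ e t)
    (hgrowth : ∀ t, U ≤ t → e t ≤ C * t / log t) {u : ℝ} (hUu : U ≤ u) (hu : 1 < u)
    (n : ℕ) : (fun t => t + e t)^[n] u ≤ u * exp (n * (C / log u)) := by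
  induction n with
  | zero => simp
  | succ n ih =>
    set s := (fun t => t + e t)^[n] u
    have hus : u ≤ s := le_iterate_add_self he u n
    have hs : 0 < s := by linarith
    have hlog : 0 < log u := log_pos hu
    have hstep : s + e s ≤ s * exp (C / log u) := calc
      s + e s ≤ s + C * s / log s := by gcongr; exact hgrowth s (hUu.trans hus)
      _ ≤ s + C * s / log u := by gcongr
      _ = s * (C / log u + 1) := by field_simp; ring
      _ ≤ s * exp (C / log u) :=
        mul_le_mul_of_nonneg_left (add_one_le_exp _) hs.le
    rw [Function.iterate_succ_apply']
    calc s + e s ≤ s * exp (C / log u) := hstep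
      _ ≤ u * exp (n * (C / log u)) * exp (C / log u) := by gcongr
      _ = u * exp ((n + 1 : ℕ) * (C / log u)) := by
        rw [mul_assoc, ← exp_add]; push_cast; ring_nf

lemma eventually_apply_add_le_mul_of_tendsto_div (hF : Antitone F) (hF0 : ∀ t, 0 ≤ F t)
    (he : ∀ t, 0 ≤ e t) {l q : ℝ} (h : Tendsto (fun u => F (u + e u) / F u) atTop (𝓝 l))
    (hlq : l < q) : ∀ᶠ t in atTop, F (t + e t) ≤ q * F t := by
  filter_upwards [h.eventually (gt_mem_nhds hlq)] with t ht
  rcases (hF0 t).eq_or_lt with h0 | hpos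
  · calc F (t + e t) ≤ F t := hF (le_add_of_nonneg_right (he t))
      _ = q * F t := by rw [← h0, mul_zero]
  · exact ((div_lt_iff₀ hpos).1 ht).le

lemma eventually_le_mul_div_log_of_tendsto {c C : ℝ}
    (h : Tendsto (fun u => e u * log u / u) atTop (𝓝 c)) (hcC : c < C) :
    ∀ᶠ u in atTop, e u ≤ C * u / log u := by
  filter_upwards [h.eventually (gt_mem_nhds hcC), eventually_gt_atTop 1] with u hlt hu
  rw [div_lt_iff₀ (by linarith)] at hlt
  rw [le_div_iff₀ (log_pos hu)]
  linarith

/-- `K = (2m + 3) C` bounds `n C / log u` for `n = ⌈2(m+1) log u⌉₊` once `log u ≥ 1`. -/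
lemma apply_mul_exp_le_rpow_neg_mul (hF : Antitone F) (hF0 : ∀ t, 0 ≤ F t)
    (he : ∀ t, 0 ≤ e t) {U₀ U₁ C m u : ℝ} (hC : 0 ≤ C) (hm : 0 ≤ m + 1)
    (hcontract : ∀ t, U₀ ≤ t → F (t + e t) ≤ exp (-1 / 2) * F t)
    (hgrowth : ∀ t, U₁ ≤ t → e t ≤ C * t / log t)
    (hU₀ : U₀ ≤ u) (hU₁ : U₁ ≤ u) (hu : 1 < u) (hlog : 1 ≤ log u) :
    F (u * exp ((2 * m + 3) * C)) ≤ u ^ (-(m + 1)) * F u := by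
  set L := log u with hL
  set n := ⌈2 * (m + 1) * L⌉₊
  have hn_ge : 2 * (m + 1) * L ≤ n := Nat.le_ceil _
  have hn_le : (n : ℝ) ≤ 2 * (m + 1) * L + 1 :=
    (Nat.ceil_lt_add_one (by nlinarith)).le
  have horbit : (fun t => t + e t)^[n] u ≤ u * exp ((2 * m + 3) * C) := by
    refine (iterate_add_le_mul_exp hC he hgrowth hU₁ hu n).trans <|
      mul_le_mul_of_nonneg_left (exp_le_exp.2 ?_) (by linarith)
    rw [← mul_div_assoc, div_le_iff₀ (by linarith)]
    nlinarith [mul_le_mul_of_nonneg_right hn_le hC]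
  have hdecay : exp (-1 / 2) ^ n ≤ u ^ (-(m + 1)) := by
    rw [← exp_nat_mul, rpow_def_of_pos (by linarith), ← hL]
    exact exp_le_exp.2 (by linarith)
  calc F (u * exp ((2 * m + 3) * C)) ≤ F ((fun t => t + e t)^[n] u) := hF horbit
    _ ≤ exp (-1 / 2) ^ n * F u :=
      apply_iterate_add_le_pow_mul (exp_pos _).le he hcontract hU₀ n
    _ ≤ u ^ (-(m + 1)) * F u := mul_le_mul_of_nonneg_right hdecay (hF0 u)

theorem exists_tendsto_rpow_mul_div_of_antitone (hF : Antitone F) (hF0 : ∀ t, 0 ≤ F t)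
    (he : ∀ t, 0 ≤ e t) {C m c : ℝ} (hC : 0 ≤ C) (hm : 0 ≤ m + 1) (hc : 0 < c)
    (hcontract : ∀ᶠ t in atTop, F (t + e t) ≤ exp (-1 / 2) * F t)
    (hgrowth : ∀ᶠ t in atTop, e t ≤ C * t / log t) :
    ∃ k > 0, Tendsto (fun u => u ^ m * (F ((u / c) ^ (1 / (1 - k / log u))) / F u))
      atTop (𝓝 0) := by
  obtain ⟨U₀, hU₀⟩ := eventually_atTop.1 hcontract
  obtain ⟨U₁, hU₁⟩ := eventually_atTop.1 hgrowth
  set K := (2 * m + 3) * C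
  set k := K + |log c| + 1
  have hK : 0 ≤ K := mul_nonneg (by linarith) hC
  refine ⟨k, by positivity, squeeze_zero' ?_ ?_ tendsto_inv_atTop_zero⟩
  · filter_upwards [eventually_gt_atTop 0] with u hu
    exact mul_nonneg (rpow_nonneg hu.le m) (div_nonneg (hF0 _) (hF0 u))
  filter_upwards [eventually_ge_atTop U₀, eventually_ge_atTop U₁, eventually_gt_atTop 1,
    tendsto_log_atTop.eventually_gt_atTop k] with u hU₀u hU₁u hu hku
  have hpoint : u * exp K ≤ (u / c) ^ (1 / (1 - k / log u)) :=
    mul_exp_le_rpow_one_div_one_sub (by linarith) hc hK (by positivity)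
      (by linarith [le_abs_self (log c)]) hku
  have hratio : F ((u / c) ^ (1 / (1 - k / log u))) / F u ≤ u ^ (-(m + 1)) :=
    div_le_of_le_mul₀ (hF0 u) (rpow_nonneg (by linarith) _) <|
      (hF hpoint).trans <| apply_mul_exp_le_rpow_neg_mul hF hF0 he hC hm hU₀ hU₁ hU₀u hU₁u
        hu (by linarith [abs_nonneg (log c)])
  calc u ^ m * (F ((u / c) ^ (1 / (1 - k / log u))) / F u) ≤ u ^ m * u ^ (-(m + 1)) := by
        gcongr
    _ = u⁻¹ := by
      rw [← rpow_add (by linarith), show m + -(m + 1) = -1 by ring, rpow_neg_one]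

end TailBounds

theorem negligible_tail_general
    {Ω : Type*} [MeasureSpace Ω] [IsProbabilityMeasure (ℙ : Measure Ω)]
    (R : Ω → ℝ)
    (e : ℝ → ℝ) (hepos : ∀ u : ℝ, 0 < e u)
    (hGumbel : ∀ x : ℝ, Tendsto
      (fun u => (ℙ {ω | u + x * e u < Real.exp (R ω)}).toReal /
        (ℙ {ω | u < Real.exp (R ω)}).toReal) atTop (nhds (Real.exp (-x))))
    (c₀ : ℝ) (hc₀ : 0 ≤ c₀)
    (he : Tendsto (fun u => e u * Real.log u / u) atTop (nhds c₀))
    (m c₁ : ℝ) (hm : 0 < m) (hc₁ : 0 < c₁) :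
    ∃ k > (0 : ℝ),
      Tendsto (fun u => u ^ m *
          ((ℙ {ω | (u / c₁) ^ (1 / (1 - k / Real.log u)) < Real.exp (R ω)}).toReal /
            (ℙ {ω | u < Real.exp (R ω)}).toReal))
        atTop (nhds 0) := by
  set F : ℝ → ℝ := fun t => (ℙ {ω | t < exp (R ω)}).toReal
  have hF : Antitone F := fun a b hab =>
    ENNReal.toReal_mono (measure_ne_top _ _) (measure_mono fun ω hω => hab.trans_lt hω)
  have hF0 : ∀ t, 0 ≤ F t := fun _ => ENNReal.toReal_nonneg
  have he0 : ∀ t, 0 ≤ e t := fun t => (hepos t).le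
  have hcontract : ∀ᶠ t in atTop, F (t + e t) ≤ exp (-1 / 2) * F t :=
    eventually_apply_add_le_mul_of_tendsto_div hF hF0 he0 (by simpa using hGumbel 1)
      (exp_lt_exp.2 (by norm_num))
  exact exists_tendsto_rpow_mul_div_of_antitone hF hF0 he0 (by linarith) (by linarith) hc₁
    hcontract (eventually_le_mul_div_log_of_tendsto he (lt_add_one c₀))

/-- If the distribution function of `e^R` is in the Gumbel max-domain of
attraction with scaling function `e(·)` and `e(u) log u / u → c₀ ∈ [0,∞)`, then for every
`m > 0` and `c₁ > 0` there exists `k > 0` such that, with `a(u) = 1 − k/log u`,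
`u^m P(e^R > (u/c₁)^{1/a(u)})/P(e^R > u) → 0`. -/
theorem negligible_tail
    {Ω : Type*} [MeasureSpace Ω] [IsProbabilityMeasure (ℙ : Measure Ω)]
    (R : Ω → ℝ) (hRmeas : Measurable R) (hRpos : ∀ ω, 0 < R ω)
    (hRtail : ∀ u : ℝ, 0 < ℙ {ω | u < Real.exp (R ω)})
    (e : ℝ → ℝ) (hepos : ∀ u : ℝ, 0 < e u)
    (hGumbel : ∀ x : ℝ, Tendsto
      (fun u => (ℙ {ω | u + x * e u < Real.exp (R ω)}).toReal /
        (ℙ {ω | u < Real.exp (R ω)}).toReal) atTop (nhds (Real.exp (-x))))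
    (c₀ : ℝ) (hc₀ : 0 ≤ c₀)
    (he : Tendsto (fun u => e u * Real.log u / u) atTop (nhds c₀))
    (m c₁ : ℝ) (hm : 0 < m) (hc₁ : 0 < c₁) :
    ∃ k > (0 : ℝ),
      Tendsto (fun u => u ^ m *
          ((ℙ {ω | (u / c₁) ^ (1 / (1 - k / Real.log u)) < Real.exp (R ω)}).toReal /
            (ℙ {ω | u < Real.exp (R ω)}).toReal))
        atTop (nhds 0) :=
  negligible_tail_general R e hepos hGumbel c₀ hc₀ he m c₁ hm hc₁
end
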